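/- Let G be a finite connected simple graph with a full-dimensional hypercube isometry μ : V → {0,1}^τ, and let M be a matching of maximum size in the semicube graph Sc(G). Then the lattice dimension of G equals τ − |M|; that is, G has an isometric embedding into ℤ^{τ−|M|}, and G has no isometric embedding into ℤ^{d'} for any d' < τ − |M|. -/

import Mathlib

/-- The semicube `S_{i,χ} = {v | μ_i(v) = χ}` of a hypercube embedding `μ`. -/
def semicube {V ι : Type*} (μ : V → ι → Bool) (i : ι) (χ : Bool) : Set V :=
  {v | μ v i = χ}

/-- The semicube graph `Sc(G)`: vertices are the pairs `(i,χ)` (representing the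
semicubes `S_{i,χ}`), with an edge between two distinct pairs exactly when the
corresponding semicubes cover all vertices and intersect nontrivially. -/
def semicubeGraph {V ι : Type*} (μ : V → ι → Bool) : SimpleGraph (ι × Bool) where
  Adj p q := p ≠ q ∧
    semicube μ p.1 p.2 ∪ semicube μ q.1 q.2 = Set.univ ∧
    (semicube μ p.1 p.2 ∩ semicube μ q.1 q.2).Nonempty
  symm := by
    constructor
    rintro p q ⟨h1, h2, h3⟩
    exact ⟨h1.symm, by rwa [Set.union_comm], by rwa [Set.inter_comm]⟩
  loopless := by constructor; rintro p ⟨h1, -⟩; exact h1 rfl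

/-- `M` is a matching in the graph `H`: a finite set of edges of `H`,
no two of which share an endpoint. -/
def IsMatchingIn {α : Type*} (H : SimpleGraph α) (M : Finset (Sym2 α)) : Prop :=
  (∀ e ∈ M, e ∈ H.edgeSet) ∧
    ∀ e ∈ M, ∀ f ∈ M, e ≠ f → ∀ a, a ∈ e → a ∉ f

/-!
A matching edge `{(i, !a), (j, b)}` of `Sc(G)` says exactly that `S_{i,a} ⊊ S_{j,b}`. Following
matching edges therefore links semicubes into chains of nested sets; these chains come in
complementary pairs, and we choose one chain of each pair. Giving every vertex, per chosen chain,
the number of semicubes of the chain containing it is an `ℓ¹`-isometric embedding, since along a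
chain this count changes by exactly the number of its semicubes separating two vertices. Each
chain has a maximal semicube, and the non-maximal chosen semicubes are matched through their
complements by edges covering `M`, so there are at most `τ - |M|` chains.

Conversely, if `λ` embeds `G` isometrically into `ℤ^d`, every edge changes one coordinate of `λ`
by one, and comparing `d(w, v) - d(w, u)` computed through `λ` and through `μ` for an edge `uv`
shows that each semicube is a cut `{λ_t ≤ c}`. Distinct coordinates of `μ` give distinct cuts,
the levels `c` of the cuts of one coordinate `t` form an interval, and consecutive cuts
`{λ_t ≤ c} ⊊ {λ_t ≤ c + 1}` form a matching of `Sc(G)` with at least `τ - d` edges.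
-/

open Finset Relation

theorem Relation.EqvGen.symmGen_reflTransGen {α : Type*} {r : α → α → Prop}
    (hr : Relator.RightUnique r) (hl : Relator.LeftUnique r) {a b : α} (h : EqvGen r a b) :
    SymmGen (ReflTransGen r) a b := by
  rw [← reflTransGen_symmGen] at h
  induction h with
  | refl => exact .of_rel .refl
  | tail _ hbc ih =>
    rcases hbc with hbc | hcb
    · rcases ih with hab | hba
      · exact .of_rel (hab.tail hbc)
      · exact ReflTransGen.total_of_right_unique hr hba (.single hbc)
    · rcases ih with hab | hba
      · have := ReflTransGen.total_of_right_unique (r := Function.swap r)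
          (fun _ _ _ h h' => hl h h') (reflTransGen_swap.2 hab) (.single hcb)
        simpa only [reflTransGen_swap, SymmGen, or_comm] using this
      · exact .of_rel_symm (hba.head hcb)

theorem exists_orientation_of_setoid {ι : Type*} (s : Setoid (ι × Bool))
    (hs : ∀ p q, s p q → s (p.1, !p.2) (q.1, !q.2)) (hopp : ∀ p, ¬ s p (p.1, !p.2)) :
    ∃ χ : ι → Bool, ∀ i j b, s (i, χ i) (j, b) → b = χ j := by
  -- of the two classes of `(i, false)` and `(i, true)`, choose the larger in some linear order
  let _ : LinearOrder (Quotient s) := IsWellOrder.linearOrder WellOrderingRel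
  let χ : ι → Bool := fun i => decide ((⟦(i, false)⟧ : Quotient s) < ⟦(i, true)⟧)
  have hchosen : ∀ i, (⟦(i, !χ i)⟧ : Quotient s) < ⟦(i, χ i)⟧ := by
    intro i
    have hne' : (⟦(i, true)⟧ : Quotient s) ≠ ⟦(i, false)⟧ :=
      fun h => hopp (i, true) (Quotient.exact h)
    by_cases h : (⟦(i, false)⟧ : Quotient s) < ⟦(i, true)⟧
    · simp [χ, h]
    · simpa [χ, h] using lt_of_le_of_ne (not_lt.mp h) hne'
  refine ⟨χ, fun i j b hij => ?_⟩
  have key := hchosen i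
  rw [Quotient.sound hij, Quotient.sound (hs _ _ hij)] at key
  by_contra hb
  obtain rfl : b = !χ j := by revert hb; cases b <;> cases χ j <;> decide
  rw [Bool.not_not] at key
  exact lt_asymm key (hchosen j)

lemma abs_card_filter_sub_card_filter_of_subset {ι : Type*} (s : Finset ι) {P Q : ι → Prop}
    [DecidablePred P] [DecidablePred Q] (h : s.filter P ⊆ s.filter Q) :
    |(#(s.filter P) : ℤ) - #(s.filter Q)| = #(s.filter fun i => ¬ (P i ↔ Q i)) := by
  classical
  have hPQ : ∀ i ∈ s, P i → Q i := fun i hi hP =>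
    (mem_filter.mp (h (mem_filter.mpr ⟨hi, hP⟩))).2
  rw [abs_sub_comm, abs_of_nonneg (sub_nonneg.mpr (mod_cast card_le_card h)),
    ← Nat.cast_sub (card_le_card h), ← card_sdiff_of_subset h]
  congr 2
  ext i
  simp only [mem_sdiff, mem_filter]
  have := hPQ i
  tauto

theorem sum_abs_card_sub_card_fiberwise {V ι κ : Type*} [Fintype ι] [Fintype κ] [DecidableEq κ]
    (A : ι → Set V) [∀ i, DecidablePred (· ∈ A i)] (c : ι → κ)
    (hA : ∀ i j, c i = c j → A i ⊆ A j ∨ A j ⊆ A i) (u v : V) :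
    ∑ k, |(#{i | c i = k ∧ u ∈ A i} : ℤ) - #{i | c i = k ∧ v ∈ A i}| =
      #{i | ¬ (u ∈ A i ↔ v ∈ A i)} := by
  have hfiber : ∀ k, |(#{i | c i = k ∧ u ∈ A i} : ℤ) - #{i | c i = k ∧ v ∈ A i}| =
      #{i | c i = k ∧ ¬ (u ∈ A i ↔ v ∈ A i)} := by
    intro k
    simp only [← filter_filter]
    set s : Finset ι := {i | c i = k}
    have hchain : ∀ a b : V, ¬ s.filter (a ∈ A ·) ⊆ s.filter (b ∈ A ·) →
        s.filter (b ∈ A ·) ⊆ s.filter (a ∈ A ·) := by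
      intro a b hab j hj
      obtain ⟨i, hi, hbi⟩ := not_subset.mp hab
      simp only [s, mem_filter, mem_univ, true_and] at hi hj hbi ⊢
      refine ⟨hj.1, (hA i j (hi.1.trans hj.1.symm)).elim (· hi.2) fun hji => ?_⟩
      exact absurd ⟨hi.1, hji hj.2⟩ hbi
    by_cases huv : s.filter (u ∈ A ·) ⊆ s.filter (v ∈ A ·)
    · exact abs_card_filter_sub_card_filter_of_subset s huv
    · rw [abs_sub_comm, abs_card_filter_sub_card_filter_of_subset s (hchain u v huv)]
      simp only [iff_comm]
  rw [card_eq_sum_card_fiberwise (f := c) (t := univ) (fun _ _ => mem_univ _)]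
  simp only [hfiber, filter_filter, and_comm, Nat.cast_sum]

theorem card_le_card_filter_succ_add {ι κ : Type*} [Fintype ι] [Fintype κ] [DecidableEq κ]
    (f : ι → κ × ℤ) (hf : Function.Injective f)
    (hconv : ∀ i j, (f i).1 = (f j).1 → (f i).2 < (f j).2 →
      ∃ k, f k = ((f i).1, (f i).2 + 1)) :
    Fintype.card ι ≤ #{x : ι × ι | f x.2 = ((f x.1).1, (f x.1).2 + 1)} + Fintype.card κ := by
  classical
  set N : Finset ι := {i | ∀ k, f k ≠ ((f i).1, (f i).2 + 1)}
  have hN : #N ≤ Fintype.card κ := by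
    refine card_le_card_of_injOn (fun i => (f i).1) (fun _ _ => mem_univ _) fun i hi j hj hij => ?_
    simp only [N, coe_filter, mem_univ, true_and, Set.mem_ofPred_eq] at hi hj hij
    rcases lt_trichotomy (f i).2 (f j).2 with hlt | heq | hgt
    · exact absurd (hconv i j hij hlt) (by simpa using hi)
    · exact hf (Prod.ext hij heq)
    · exact absurd (hconv j i hij.symm hgt) (by simpa using hj)
  have hNc :
      #(univ.filter (· ∉ N)) ≤ #{x : ι × ι | f x.2 = ((f x.1).1, (f x.1).2 + 1)} := by
    refine le_trans (card_le_card fun i hi => ?_) (card_image_le (f := Prod.fst))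
    simp only [N, mem_filter, mem_univ, true_and, not_forall, not_not] at hi
    obtain ⟨k, hk⟩ := hi
    exact mem_image.mpr ⟨(i, k), by simpa using hk, rfl⟩
  have := card_filter_add_card_filter_not (s := univ) (· ∈ N)
  simp only [filter_mem_eq_inter, univ_inter, card_univ] at this
  omega

lemma eq_of_hammingDist_eq_one {ι : Type*} [Fintype ι] {β : ι → Type*}
    [∀ i, DecidableEq (β i)] {x y : ∀ i, β i} (h : hammingDist x y = 1) {i j : ι}
    (hi : x i ≠ y i) (hj : x j ≠ y j) : i = j :=
  card_le_one.mp h.le i (by simpa using hi) j (by simpa using hj)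

lemma exists_abs_eq_one_of_sum_abs_eq_one {κ : Type*} [Fintype κ] {f : κ → ℤ}
    (h : ∑ t, |f t| = 1) : ∃ t, |f t| = 1 ∧ ∀ s ≠ t, f s = 0 := by
  classical
  obtain ⟨t, ht⟩ : ∃ t, f t ≠ 0 := by
    by_contra! h0
    simp [h0] at h
  have hsplit := add_sum_erase univ (fun s => |f s|) (mem_univ t)
  have hrest : 0 ≤ ∑ s ∈ univ.erase t, |f s| := sum_nonneg fun _ _ => abs_nonneg _
  have hpos : 1 ≤ |f t| := Int.one_le_abs ht
  refine ⟨t, by linarith, fun s hs => abs_eq_zero.mp ?_⟩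
  exact (sum_eq_zero_iff_of_nonneg fun s _ => abs_nonneg (f s)).mp (by linarith) s
    (mem_erase.mpr ⟨hs, mem_univ s⟩)

lemma SimpleGraph.Connected.exists_adj_mem_not_mem {V : Type*} {G : SimpleGraph V}
    (hconn : G.Connected) {S : Set V} {a b : V} (ha : a ∈ S) (hb : b ∉ S) :
    ∃ x y, G.Adj x y ∧ x ∈ S ∧ y ∉ S := by
  obtain ⟨d, -, hd⟩ := (hconn.preconnected a b).some.exists_boundary_dart S ha hb
  exact ⟨d.fst, d.snd, d.adj, hd⟩

lemma IsMatchingIn.eq_of_mem {α : Type*} {H : SimpleGraph α} {M : Finset (Sym2 α)}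
    (hM : IsMatchingIn H M) {e f : Sym2 α} {a : α} (he : e ∈ M)
    (hf : f ∈ M) (hae : a ∈ e) (haf : a ∈ f) : e = f := by
  by_contra hef
  exact hM.2 e he f hf hef a hae haf

theorem isMatchingIn_image_and_card_eq {ι : Type*} [DecidableEq ι] (H : SimpleGraph (ι × Bool))
    (β : ι → Bool) (P : Finset (ι × ι))
    (hfst : ∀ x ∈ P, ∀ y ∈ P, x.1 = y.1 → x = y)
    (hsnd : ∀ x ∈ P, ∀ y ∈ P, x.2 = y.2 → x = y)
    (hadj : ∀ x ∈ P, H.Adj (x.1, !β x.1) (x.2, β x.2)) :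
    IsMatchingIn H (P.image fun x => s((x.1, !β x.1), (x.2, β x.2))) ∧
      #(P.image fun x => s((x.1, !β x.1), (x.2, β x.2))) = #P := by
  have hcross : ∀ x y : ι × ι, (x.1, !β x.1) ≠ (y.2, β y.2) := by
    intro x y h
    obtain ⟨h1, h2⟩ := Prod.ext_iff.mp h
    rw [h1] at h2
    exact Bool.not_ne_self _ h2
  refine ⟨⟨fun e he => ?_, fun e he f hf hef p hpe hpf => ?_⟩, card_image_of_injOn ?_⟩
  · obtain ⟨x, hx, rfl⟩ := mem_image.mp he
    exact hadj x hx
  · obtain ⟨x, hx, rfl⟩ := mem_image.mp he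
    obtain ⟨y, hy, rfl⟩ := mem_image.mp hf
    have hxy : x ≠ y := fun h => hef (h ▸ rfl)
    simp only [Sym2.mem_iff] at hpe hpf
    rcases hpe with rfl | rfl <;> rcases hpf with h | h
    · exact hxy (hfst x hx y hy (Prod.ext_iff.mp h).1)
    · exact hcross x y h
    · exact hcross y x h.symm
    · exact hxy (hsnd x hx y hy (Prod.ext_iff.mp h).1)
  · intro x hx y hy hxy
    rcases Sym2.eq_iff.mp hxy with ⟨h, -⟩ | ⟨h, -⟩
    · exact hfst x hx y hy (Prod.ext_iff.mp h).1
    · exact absurd h (hcross x y)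

section Semicube

variable {V ι : Type*} (μ : V → ι → Bool)

lemma semicube_not (i : ι) (b : Bool) : semicube μ i (!b) = (semicube μ i b)ᶜ := by
  ext v
  cases b <;> simp [semicube]

lemma semicube_ssubset_of_adj {i j : ι} {a b : Bool}
    (h : (semicubeGraph μ).Adj (i, !a) (j, b)) : semicube μ i a ⊂ semicube μ j b := by
  obtain ⟨-, hunion, x, hxi, hxj⟩ := h
  simp only [semicube_not] at hunion hxi
  refine ⟨fun w hw => ?_, fun hsub => hxi (hsub hxj)⟩
  simpa [hw] using (Set.eq_univ_iff_forall.mp hunion w)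

lemma semicubeGraph_adj_of_ssubset {i j : ι} {a b : Bool} (hij : i ≠ j)
    (h : semicube μ i a ⊂ semicube μ j b) : (semicubeGraph μ).Adj (i, !a) (j, b) := by
  obtain ⟨x, hxj, hxi⟩ := Set.exists_of_ssubset h
  refine ⟨fun h => hij (congrArg Prod.fst h), ?_, x, ?_, hxj⟩
  · simp only [semicube_not]
    exact Set.eq_univ_of_forall fun w => (em (w ∈ semicube μ i a)).symm.imp id (h.1 ·)
  · simpa [semicube_not] using hxi

lemma semicubeGraph_adj_of_eq_setOf_le {κ : Type*} {lam : V → κ → ℤ} {i j : ι} {a b : Bool}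
    {t : κ} {c : ℤ} {w : V}
    (hij : i ≠ j) (hi : semicube μ i a = {v | lam v t ≤ c})
    (hj : semicube μ j b = {v | lam v t ≤ c + 1}) (hw : lam w t = c + 1) :
    (semicubeGraph μ).Adj (i, !a) (j, b) := by
  refine semicubeGraph_adj_of_ssubset μ hij ?_
  rw [hi, hj]
  refine (Set.ssubset_iff_of_subset fun v (hv : lam v t ≤ c) => ?_).mpr ⟨w, ?_, ?_⟩
  · show lam v t ≤ c + 1
    omega
  · show lam w t ≤ c + 1
    omega
  · show ¬ lam w t ≤ c
    omega

end Semicube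

theorem exists_isMatchingIn_and_card_le_card_add_of_cuts {V ι κ : Type*} [Fintype ι] [Fintype κ]
    {μ : V → ι → Bool} {lam : V → κ → ℤ} (β : ι → Bool) (f : ι → κ × ℤ)
    (hf : Function.Injective f)
    (hconv : ∀ i j, (f i).1 = (f j).1 → (f i).2 < (f j).2 →
      ∃ k, f k = ((f i).1, (f i).2 + 1))
    (hcut : ∀ i, semicube μ i (β i) = {w | lam w (f i).1 ≤ (f i).2})
    (hw : ∀ i, ∃ w, lam w (f i).1 = (f i).2 + 1) :
    ∃ M, IsMatchingIn (semicubeGraph μ) M ∧ Fintype.card ι ≤ #M + Fintype.card κ := by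
  classical
  set P : Finset (ι × ι) := {x | f x.2 = ((f x.1).1, (f x.1).2 + 1)}
  have hP : ∀ x ∈ P, f x.2 = ((f x.1).1, (f x.1).2 + 1) := fun x hx => (mem_filter.mp hx).2
  obtain ⟨hM, hcard⟩ := isMatchingIn_image_and_card_eq (semicubeGraph μ) β P
    (fun x hx y hy h1 => Prod.ext h1 (hf (by rw [hP x hx, hP y hy, h1])))
    (fun x hx y hy h2 => by
      have h := (hP x hx).symm.trans (h2 ▸ hP y hy)
      simp only [Prod.mk.injEq, add_left_inj] at h
      exact Prod.ext (hf (Prod.ext h.1 h.2)) h2)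
    (fun x hx => by
      have hx' := hP x hx
      obtain ⟨w, hw⟩ := hw x.1
      refine semicubeGraph_adj_of_eq_setOf_le μ (fun h => ?_) (hcut x.1)
        (by rw [hcut x.2, hx']) hw
      rw [h] at hx'
      simpa using congrArg Prod.snd hx')
  exact ⟨_, hM, hcard ▸ card_le_card_filter_succ_add f hf hconv⟩

def MatchStep {ι : Type*} (M : Finset (Sym2 (ι × Bool))) (p q : ι × Bool) : Prop :=
  s((p.1, !p.2), q) ∈ M

section MatchStep

variable {V ι : Type*} {μ : V → ι → Bool} {M : Finset (Sym2 (ι × Bool))}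

lemma matchStep_rightUnique (hM : IsMatchingIn (semicubeGraph μ) M) :
    Relator.RightUnique (MatchStep M) := fun _ _ _ hq hq' =>
  Sym2.congr_right.mp (hM.eq_of_mem hq hq' (Sym2.mem_mk_left _ _) (Sym2.mem_mk_left _ _))

lemma matchStep_leftUnique (hM : IsMatchingIn (semicubeGraph μ) M) :
    Relator.LeftUnique (MatchStep M) := fun p p' q hp hp' => by
  have := Sym2.congr_left.mp (hM.eq_of_mem hp hp' (Sym2.mem_mk_right _ _) (Sym2.mem_mk_right _ _))
  simp only [Prod.mk.injEq, Bool.not_inj_iff] at this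
  exact Prod.ext this.1 this.2

lemma MatchStep.opp {p q : ι × Bool} (h : MatchStep M p q) :
    MatchStep M (q.1, !q.2) (p.1, !p.2) := by
  show s((q.1, !!q.2), (p.1, !p.2)) ∈ M
  rwa [Bool.not_not, Sym2.eq_swap]

lemma MatchStep.semicube_ssubset (hM : IsMatchingIn (semicubeGraph μ) M) {p q : ι × Bool}
    (h : MatchStep M p q) : semicube μ p.1 p.2 ⊂ semicube μ q.1 q.2 :=
  semicube_ssubset_of_adj μ (hM.1 _ h)

lemma semicube_subset_of_reflTransGen (hM : IsMatchingIn (semicubeGraph μ) M)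
    {p q : ι × Bool} (h : ReflTransGen (MatchStep M) p q) :
    semicube μ p.1 p.2 ⊆ semicube μ q.1 q.2 := by
  induction h with
  | refl => rfl
  | tail _ hstep ih => exact ih.trans (hstep.semicube_ssubset hM).subset

lemma eqvGen_matchStep_opp {p q : ι × Bool} (h : EqvGen (MatchStep M) p q) :
    EqvGen (MatchStep M) (p.1, !p.2) (q.1, !q.2) := by
  induction h with
  | rel _ _ h => exact .symm _ _ (.rel _ _ h.opp)
  | refl => exact .refl _
  | symm _ _ _ ih => exact .symm _ _ ih
  | trans _ _ _ _ _ ih ih' => exact .trans _ _ _ ih ih'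

lemma semicube_comparable_of_eqvGen (hM : IsMatchingIn (semicubeGraph μ) M) {p q : ι × Bool}
    (h : EqvGen (MatchStep M) p q) :
    semicube μ p.1 p.2 ⊆ semicube μ q.1 q.2 ∨ semicube μ q.1 q.2 ⊆ semicube μ p.1 p.2 :=
  (h.symmGen_reflTransGen (matchStep_rightUnique hM) (matchStep_leftUnique hM)).imp
    (semicube_subset_of_reflTransGen hM) (semicube_subset_of_reflTransGen hM)

lemma not_eqvGen_matchStep_opp (hM : IsMatchingIn (semicubeGraph μ) M)
    (hne : ∀ i b, (semicube μ i b).Nonempty) (p : ι × Bool) :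
    ¬ EqvGen (MatchStep M) p (p.1, !p.2) := by
  intro h
  rcases semicube_comparable_of_eqvGen hM h with hsub | hsub <;> rw [semicube_not] at hsub
  · obtain ⟨x, hx⟩ := hne p.1 p.2
    exact hsub hx hx
  · obtain ⟨x, hx⟩ := hne p.1 (!p.2)
    rw [semicube_not] at hx
    exact hx (hsub hx)

lemma exists_reflTransGen_matchStep_maximal [Finite V] [Finite ι]
    (hM : IsMatchingIn (semicubeGraph μ) M) (p : ι × Bool) :
    ∃ q, ReflTransGen (MatchStep M) p q ∧ ∀ q', ¬ MatchStep M q q' := by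
  obtain ⟨q, hpq, hmax⟩ := Set.exists_max_image {q | ReflTransGen (MatchStep M) p q}
    (fun q => (semicube μ q.1 q.2).ncard) (Set.toFinite _) ⟨p, .refl⟩
  refine ⟨q, hpq, fun q' hq' => ?_⟩
  exact (hmax q' (hpq.tail hq')).not_gt
    (Set.ncard_lt_ncard (hq'.semicube_ssubset hM) (Set.toFinite _))

variable {χ : ι → Bool}

open Classical in
lemma card_add_card_filter_maximal_le [Fintype ι] (hM : IsMatchingIn (semicubeGraph μ) M)
    (hχ : ∀ i j b, EqvGen (MatchStep M) (i, χ i) (j, b) → b = χ j) :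
    #M + #{i | ∀ q, ¬ MatchStep M (i, χ i) q} ≤ Fintype.card ι := by
  have hsplit := card_filter_add_card_filter_not (s := univ)
    fun i => ∀ q, ¬ MatchStep M (i, χ i) q
  simp only [not_forall, not_not, card_univ] at hsplit
  suffices #M ≤ #{i | ∃ q, MatchStep M (i, χ i) q} by omega
  -- each edge of `M` contains an unchosen semicube `(i, !χ i)`, and then `(i, χ i)` has a step
  refine card_le_card_of_forall_subsingleton (fun e i => (i, !χ i) ∈ e) (fun e he => ?_)
    fun i _ e₁ he₁ e₂ he₂ => hM.eq_of_mem he₁.1 he₂.1 he₁.2 he₂.2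
  induction e using Sym2.ind with | _ a b => ?_
  have hunchosen : ∀ a b, s(a, b) ∈ M → a.2 ≠ χ a.1 →
      ∃ i ∈ ({i | ∃ q, MatchStep M (i, χ i) q} : Finset ι), (i, !χ i) ∈ s(a, b) := by
    intro a b hab ha
    have ha' : a = (a.1, !χ a.1) := Prod.ext rfl (Bool.eq_not.mpr ha)
    refine ⟨a.1, mem_filter.mpr ⟨mem_univ _, b, ?_⟩, ?_⟩
    · show s((a.1, !χ a.1), b) ∈ M
      rwa [← ha']
    · rw [← ha']
      exact Sym2.mem_mk_left _ _
  by_cases ha : a.2 = χ a.1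
  · by_cases hb : b.2 = χ b.1
    · have hstep : MatchStep M (a.1, !χ a.1) b := by
        show s((a.1, !!χ a.1), b) ∈ M
        rwa [Bool.not_not, ← ha]
      have hopp := eqvGen_matchStep_opp (.rel _ _ hstep)
      rw [Bool.not_not, hb] at hopp
      exact absurd (hχ _ _ _ hopp) (Bool.not_ne_self _)
    · obtain ⟨i, hi, hmem⟩ := hunchosen b a (Sym2.eq_swap ▸ he) hb
      exact ⟨i, hi, Sym2.eq_swap ▸ hmem⟩
  · exact hunchosen a b he ha

open Classical in
lemma exists_finset_card_le_forall_exists_eqvGen [Finite V] [Fintype ι]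
    (hM : IsMatchingIn (semicubeGraph μ) M)
    (hχ : ∀ i j b, EqvGen (MatchStep M) (i, χ i) (j, b) → b = χ j) :
    ∃ T : Finset ι, #T ≤ Fintype.card ι - #M ∧
      ∀ i, ∃ j ∈ T, EqvGen (MatchStep M) (i, χ i) (j, χ j) := by
  refine ⟨({i | ∀ q, ¬ MatchStep M (i, χ i) q} : Finset ι), ?_, fun i => ?_⟩
  · have := card_add_card_filter_maximal_le hM hχ
    omega
  · obtain ⟨q, hiq, hq⟩ := exists_reflTransGen_matchStep_maximal hM (i, χ i)
    have hiq' := EqvGen.reflTransGen_le_eqvGen _ _ _ hiq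
    have hq' : q = (q.1, χ q.1) := Prod.ext rfl (hχ _ _ _ hiq')
    exact ⟨q.1, mem_filter.mpr ⟨mem_univ _, hq' ▸ hq⟩, hq' ▸ hiq'⟩

end MatchStep

theorem exists_l1_embedding_of_isMatchingIn {V ι : Type*} [Finite V] [Fintype ι]
    {μ : V → ι → Bool} {M : Finset (Sym2 (ι × Bool))}
    (hne : ∀ i b, (semicube μ i b).Nonempty) (hM : IsMatchingIn (semicubeGraph μ) M) :
    ∃ lam : V → Fin (Fintype.card ι - #M) → ℤ,
      ∀ u v, ∑ k, |lam u k - lam v k| = hammingDist (μ u) (μ v) := by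
  classical
  obtain ⟨χ, hχ⟩ := exists_orientation_of_setoid (EqvGen.setoid (MatchStep M))
    (fun _ _ => eqvGen_matchStep_opp) (not_eqvGen_matchStep_opp hM hne)
  obtain ⟨T, hT, hE⟩ := exists_finset_card_le_forall_exists_eqvGen hM hχ
  choose top htop hE using hE
  let c : ι → Fin (Fintype.card ι - #M) := fun i =>
    Fin.castLE hT (T.equivFin ⟨top i, htop i⟩)
  have hchain : ∀ i j, c i = c j → semicube μ i (χ i) ⊆ semicube μ j (χ j) ∨
      semicube μ j (χ j) ⊆ semicube μ i (χ i) := by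
    intro i j hij
    have htop_eq : top i = top j := by simpa [c, Fin.castLE_inj] using hij
    exact semicube_comparable_of_eqvGen hM ((hE i).trans _ _ _ (htop_eq ▸ (hE j).symm))
  refine ⟨fun v k => #{i | c i = k ∧ v ∈ semicube μ i (χ i)}, fun u v => ?_⟩
  rw [sum_abs_card_sub_card_fiberwise _ c hchain, hammingDist]
  congr 2
  ext i
  simp only [mem_filter, mem_univ, true_and]
  show ¬(μ u i = χ i ↔ μ v i = χ i) ↔ μ u i ≠ μ v i
  cases μ u i <;> cases μ v i <;> cases χ i <;> decide

section L1Embedding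

variable {V κ : Type*} [Fintype κ] {G : SimpleGraph V} {lam : V → κ → ℤ}

lemma exists_coord_of_adj (hlam : ∀ u v, ∑ t, |lam u t - lam v t| = G.dist u v) {a b : V}
    (h : G.Adj a b) : ∃ t, |lam a t - lam b t| = 1 ∧ ∀ s ≠ t, lam a s = lam b s := by
  have h1 : ∑ t, |lam a t - lam b t| = 1 := by
    rw [hlam, SimpleGraph.dist_eq_one_iff_adj.mpr h, Nat.cast_one]
  obtain ⟨t, ht, hs⟩ := exists_abs_eq_one_of_sum_abs_eq_one h1
  exact ⟨t, ht, fun s hst => sub_eq_zero.mp (hs s hst)⟩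

lemma abs_sub_eq_one_and_eq_of_adj (hlam : ∀ u v, ∑ t, |lam u t - lam v t| = G.dist u v)
    {a b : V} (h : G.Adj a b) {t : κ} (ht : lam a t ≠ lam b t) :
    |lam a t - lam b t| = 1 ∧ ∀ s ≠ t, lam a s = lam b s := by
  obtain ⟨t₀, ht₀, hs⟩ := exists_coord_of_adj hlam h
  obtain rfl : t = t₀ := by_contra fun htt => ht (hs t htt)
  exact ⟨ht₀, hs⟩

lemma dist_sub_dist_of_adj (hlam : ∀ u v, ∑ t, |lam u t - lam v t| = G.dist u v) {a b : V}
    (h : G.Adj a b) {t : κ} (ht : lam b t = lam a t + 1) (w : V) :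
    (G.dist w b : ℤ) - G.dist w a = if lam w t ≤ lam a t then 1 else -1 := by
  have hother := (abs_sub_eq_one_and_eq_of_adj hlam h (t := t) (by omega)).2
  rw [← hlam, ← hlam, ← sum_sub_distrib, sum_eq_single t]
  · split_ifs with hw
    · rw [ht, abs_of_nonpos (show lam w t - (lam a t + 1) ≤ 0 by omega),
        abs_of_nonpos (show lam w t - lam a t ≤ 0 by omega)]
      ring
    · rw [ht, abs_of_nonneg (show 0 ≤ lam w t - (lam a t + 1) by omega),
        abs_of_nonneg (show 0 ≤ lam w t - lam a t by omega)]
      ring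
  · intro s _ hs
    rw [hother s hs, sub_self]
  · simp

lemma eq_of_adj_of_not_le_iff (hlam : ∀ u v, ∑ t, |lam u t - lam v t| = G.dist u v)
    {a b : V} (h : G.Adj a b) {s t : κ} {c : ℤ} (hs : lam b s = lam a s + 1)
    (hcross : ¬ (lam a t ≤ c ↔ lam b t ≤ c)) : t = s ∧ lam a s = c := by
  have hne : lam a t ≠ lam b t := fun heq => hcross (by rw [heq])
  obtain rfl : t = s := by
    by_contra hts
    have := (abs_sub_eq_one_and_eq_of_adj hlam h hne).2 s (Ne.symm hts)
    omega
  refine ⟨rfl, ?_⟩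
  by_contra hc
  exact hcross ⟨fun _ => by omega, fun _ => by omega⟩

lemma exists_adj_succ_of_le_of_lt (hconn : G.Connected)
    (hlam : ∀ u v, ∑ t, |lam u t - lam v t| = G.dist u v) {a b : V} {s : κ} {c : ℤ}
    (ha : lam a s ≤ c) (hb : c < lam b s) :
    ∃ x y, G.Adj x y ∧ lam y s = lam x s + 1 ∧ lam x s = c := by
  obtain ⟨x, y, hxy, hx, hy⟩ := hconn.exists_adj_mem_not_mem (S := {w | lam w s ≤ c}) ha
    (not_le.mpr hb)
  simp only [Set.mem_ofPred_eq, not_le] at hx hy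
  have h1 := (abs_sub_eq_one_and_eq_of_adj hlam hxy (t := s) (by omega)).1
  rcases abs_eq (zero_le_one' ℤ) |>.mp h1 with h | h <;> exact ⟨x, y, hxy, by omega, by omega⟩

lemma exists_adj_ne_and_succ {ι : Type*} {μ : V → ι → Bool} (hconn : G.Connected)
    (hlam : ∀ u v, ∑ t, |lam u t - lam v t| = G.dist u v) {i : ι}
    (hne : ∀ b, (semicube μ i b).Nonempty) :
    ∃ a b s, G.Adj a b ∧ μ a i ≠ μ b i ∧ lam b s = lam a s + 1 := by
  obtain ⟨x, hx⟩ := hne false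
  obtain ⟨y, hy⟩ := hne true
  have hy' : y ∉ semicube μ i false := by
    change μ y i = true at hy
    change ¬ μ y i = false
    simp [hy]
  obtain ⟨a, b, hab, ha, hb⟩ := hconn.exists_adj_mem_not_mem hx hy'
  have hi : μ a i ≠ μ b i := by
    change μ a i = false at ha
    rw [ha]
    exact Ne.symm hb
  obtain ⟨s, hs, -⟩ := exists_coord_of_adj hlam hab
  rcases abs_eq (zero_le_one' ℤ) |>.mp hs with h | h
  · exact ⟨b, a, s, hab.symm, hi.symm, by omega⟩
  · exact ⟨a, b, s, hab, hi, by omega⟩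

variable {ι : Type*} [Fintype ι] {μ : V → ι → Bool}

lemma dist_sub_dist_of_adj_of_ne (hiso : ∀ u v, hammingDist (μ u) (μ v) = G.dist u v)
    {a b : V} (h : G.Adj a b) {i : ι} (hi : μ a i ≠ μ b i) (w : V) :
    (G.dist w b : ℤ) - G.dist w a = if μ w i = μ a i then 1 else -1 := by
  have hab : hammingDist (μ a) (μ b) = 1 := by rw [hiso, SimpleGraph.dist_eq_one_iff_adj.mpr h]
  have hother : ∀ j ≠ i, μ a j = μ b j := fun j hj =>
    by_contra fun hne => hj (eq_of_hammingDist_eq_one hab hne hi)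
  simp only [← hiso, hammingDist, card_filter, Nat.cast_sum, ← sum_sub_distrib]
  rw [sum_eq_single i]
  · revert hi
    cases μ w i <;> cases μ a i <;> cases μ b i <;> decide
  · intro j _ hj
    rw [hother j hj, sub_self]
  · simp

lemma semicube_eq_setOf_le (hiso : ∀ u v, hammingDist (μ u) (μ v) = G.dist u v)
    (hlam : ∀ u v, ∑ t, |lam u t - lam v t| = G.dist u v) {a b : V} (h : G.Adj a b) {i : ι}
    (hi : μ a i ≠ μ b i) {t : κ} (ht : lam b t = lam a t + 1) :
    semicube μ i (μ a i) = {w | lam w t ≤ lam a t} := by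
  ext w
  have key := (dist_sub_dist_of_adj_of_ne hiso h hi w).symm.trans
    (dist_sub_dist_of_adj hlam h ht w)
  show μ w i = μ a i ↔ lam w t ≤ lam a t
  split_ifs at key with h1 h2 h2 <;> simp_all

lemma cut_eq_of_adj (hiso : ∀ u v, hammingDist (μ u) (μ v) = G.dist u v)
    (hlam : ∀ u v, ∑ t, |lam u t - lam v t| = G.dist u v) {i : ι} {a b a' b' : V} {s s' : κ}
    (hab : G.Adj a b) (hi : μ a i ≠ μ b i) (hs : lam b s = lam a s + 1)
    (hab' : G.Adj a' b') (hi' : μ a' i ≠ μ b' i) (hs' : lam b' s' = lam a' s' + 1) :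
    s = s' ∧ lam a' s' = lam a s := by
  have hcut := Set.ext_iff.mp (semicube_eq_setOf_le hiso hlam hab hi hs)
  refine eq_of_adj_of_not_le_iff hlam hab' hs' ?_
  have ha' : μ a' i = μ a i ↔ lam a' s ≤ lam a s := hcut a'
  have hb' : μ b' i = μ a i ↔ lam b' s ≤ lam a s := hcut b'
  rw [← ha', ← hb']
  revert hi'
  cases μ a' i <;> cases μ b' i <;> cases μ a i <;> decide

lemma eq_of_cut_eq (hiso : ∀ u v, hammingDist (μ u) (μ v) = G.dist u v)
    (hlam : ∀ u v, ∑ t, |lam u t - lam v t| = G.dist u v) {i j : ι} {a b a' b' : V} {s : κ}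
    (hab : G.Adj a b) (hi : μ a i ≠ μ b i) (hs : lam b s = lam a s + 1)
    (hab' : G.Adj a' b') (hj : μ a' j ≠ μ b' j) (hs' : lam b' s = lam a' s + 1)
    (hcut_eq : lam a' s = lam a s) : i = j := by
  have hcut := Set.ext_iff.mp (semicube_eq_setOf_le hiso hlam hab hi hs)
  have ha' : μ a' i = μ a i := (hcut a').mpr (show lam a' s ≤ lam a s by omega)
  have hb' : μ b' i ≠ μ a i :=
    fun h => absurd ((hcut b').mp h) (show ¬ lam b' s ≤ lam a s by omega)
  have hab'_dist : hammingDist (μ a') (μ b') = 1 := by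
    rw [hiso, SimpleGraph.dist_eq_one_iff_adj.mpr hab']
  exact eq_of_hammingDist_eq_one hab'_dist (ha' ▸ hb'.symm) hj

theorem exists_isMatchingIn_and_card_le_card_add (hconn : G.Connected)
    (hiso : ∀ u v, hammingDist (μ u) (μ v) = G.dist u v)
    (hne : ∀ i b, (semicube μ i b).Nonempty)
    (hlam : ∀ u v, ∑ t, |lam u t - lam v t| = G.dist u v) :
    ∃ M, IsMatchingIn (semicubeGraph μ) M ∧ Fintype.card ι ≤ #M + Fintype.card κ := by
  choose a b s hadj hflip hup using fun i => exists_adj_ne_and_succ hconn hlam (hne i)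
  refine exists_isMatchingIn_and_card_le_card_add_of_cuts (fun i => μ (a i) i)
    (fun i => (s i, lam (a i) (s i))) (fun i j hij => ?_) (fun i j hs hc => ?_)
    (fun i => semicube_eq_setOf_le hiso hlam (hadj i) (hflip i) (hup i)) (fun i => ⟨b i, hup i⟩)
  · obtain ⟨hs, hc⟩ := Prod.ext_iff.mp hij
    have hupj := hup j
    dsimp only at hs hc
    rw [← hs] at hc hupj
    exact eq_of_cut_eq hiso hlam (hadj i) (hflip i) (hup i) (hadj j) (hflip j) hupj hc.symm
  · have hupj := hup j
    dsimp only at hs hc ⊢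
    rw [← hs] at hupj hc
    obtain ⟨x, y, hxy, hup', hx⟩ := exists_adj_succ_of_le_of_lt hconn hlam
      (a := a i) (b := b j) (s := s i) (c := lam (a i) (s i) + 1) (by omega) (by omega)
    obtain ⟨k, hk⟩ : ∃ k, μ x k ≠ μ y k := by
      refine Function.ne_iff.mp (hammingDist_ne_zero.mp ?_)
      rw [hiso, SimpleGraph.dist_eq_one_iff_adj.mpr hxy]
      exact one_ne_zero
    obtain ⟨hsk, hck⟩ := cut_eq_of_adj hiso hlam (hadj k) (hflip k) (hup k) hxy hk hup'
    exact ⟨k, Prod.ext hsk (hck.symm.trans hx)⟩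

end L1Embedding

theorem lattice_dimension_eq_tau_sub_max_matching_general
    {V : Type*} [Fintype V]
    (G : SimpleGraph V) (hconn : G.Connected)
    (τ : ℕ) (μ : V → Fin τ → Bool)
    (hiso : ∀ u v : V, hammingDist (μ u) (μ v) = G.dist u v)
    (hfull : ∀ i : Fin τ, (∃ v, μ v i = false) ∧ (∃ v, μ v i = true))
    (M : Finset (Sym2 (Fin τ × Bool)))
    (hM : IsMatchingIn (semicubeGraph μ) M)
    (hmax : ∀ M' : Finset (Sym2 (Fin τ × Bool)),
      IsMatchingIn (semicubeGraph μ) M' → M'.card ≤ M.card) :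
    (∃ lam : V → Fin (τ - M.card) → ℤ,
      ∀ u v : V, ∑ i, |lam u i - lam v i| = (G.dist u v : ℤ)) ∧
    (∀ d' : ℕ, d' < τ - M.card →
      ¬∃ lam : V → Fin d' → ℤ,
        ∀ u v : V, ∑ i, |lam u i - lam v i| = (G.dist u v : ℤ)) := by
  have hne : ∀ i b, (semicube μ i b).Nonempty := fun i b => by
    cases b
    exacts [(hfull i).1, (hfull i).2]
  refine ⟨?_, fun d hd ⟨lam, hlam⟩ => ?_⟩
  · have h := exists_l1_embedding_of_isMatchingIn hne hM
    rw [Fintype.card_fin] at h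
    simpa only [hiso] using h
  · obtain ⟨M', hM', hcard⟩ := exists_isMatchingIn_and_card_le_card_add hconn hiso hne hlam
    have := hmax M' hM'
    simp only [Fintype.card_fin] at hcard
    omega

/-- **Theorem 1.** If `G` is a finite connected graph with a full-dimensional
hypercube isometry `μ : V → {0,1}^τ` (so `G` is a partial cube with isometric
dimension `τ`), and `M` is a maximum matching in the semicube graph `Sc(G)`,
then the lattice dimension of `G` is `τ − |M|`: `G` embeds isometrically into
`ℤ^(τ−|M|)` but into no `ℤ^d'` with `d' < τ − |M|`. -/
theorem lattice_dimension_eq_tau_sub_max_matching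
    {V : Type*} [Fintype V] [DecidableEq V]
    (G : SimpleGraph V) (hconn : G.Connected)
    (τ : ℕ) (μ : V → Fin τ → Bool)
    (hiso : ∀ u v : V, hammingDist (μ u) (μ v) = G.dist u v)
    (hfull : ∀ i : Fin τ, (∃ v, μ v i = false) ∧ (∃ v, μ v i = true))
    (M : Finset (Sym2 (Fin τ × Bool)))
    (hM : IsMatchingIn (semicubeGraph μ) M)
    (hmax : ∀ M' : Finset (Sym2 (Fin τ × Bool)),
      IsMatchingIn (semicubeGraph μ) M' → M'.card ≤ M.card) :
    (∃ lam : V → Fin (τ - M.card) → ℤ,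
      ∀ u v : V, ∑ i, |lam u i - lam v i| = (G.dist u v : ℤ)) ∧
    (∀ d' : ℕ, d' < τ - M.card →
      ¬∃ lam : V → Fin d' → ℤ,
        ∀ u v : V, ∑ i, |lam u i - lam v i| = (G.dist u v : ℤ)) :=
  lattice_dimension_eq_tau_sub_max_matching_general G hconn τ μ hiso hfull M hM hmax
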